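/- arXiv:2309.15823 — 5 statements merged into one kernel-verified Lean document; each statement's English description precedes it below -/
import Mathlib

section
/- Let Γ ⊆ [0, ∞) be a set of real numbers satisfying the descending chain condition. Then the set Γ₊ := {0} ∪ { γ₁ + γ₂ + ⋯ + γ_l : l a positive integer, γ_i ∈ Γ for all i } also satisfies the descending chain condition. -/
/-- A set of real numbers satisfies the descending chain condition (DCC) if every
non-increasing sequence of its elements is eventually constant. -/
def DCC (Γ : Set ℝ) : Prop :=
  ∀ f : ℕ → ℝ, (∀ n, f n ∈ Γ) → Antitone f → ∃ N, ∀ n, N ≤ n → f n = f N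

/-- `Γ₊`: the set consisting of 0 together with all finite sums
`γ₁ + ⋯ + γ_l` (`l ≥ 1`) of (not necessarily distinct) elements of Γ. -/
def plusSet (Γ : Set ℝ) : Set ℝ :=
  {0} ∪ {x | ∃ l : ℕ, 0 < l ∧ ∃ γ : Fin l → ℝ, (∀ i, γ i ∈ Γ) ∧ x = ∑ i, γ i}

/-- If Γ ⊆ [0, ∞) satisfies the DCC, then Γ₊ satisfies the DCC. -/
theorem stmt_1 (Γ : Set ℝ) (hΓ : Γ ⊆ Set.Ici 0) (hdcc : DCC Γ) :
    DCC (plusSet Γ) := by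
  -- Step 1 : Γ is well-founded
  have hwf : Γ.IsWF := by
    rw [Set.isWF_iff_no_descending_seq]
    intro f hf hmem
    obtain ⟨N, hN⟩ := hdcc f (fun n => hmem n) hf.antitone
    have := hN (N + 1) (Nat.le_succ N)
    exact absurd this (hf (Nat.lt_succ_self N)).ne
  -- Step 2 : the additive submonoid closure of Γ is well-founded
  have hclo : Set.IsWF (AddSubmonoid.closure Γ : Set ℝ) :=
    ((hwf.isPWO.addSubmonoid_closure (fun x hx => hΓ hx)).isWF)
  -- Step 3 : plusSet Γ ⊆ closure Γ
  have hsub : plusSet Γ ⊆ (AddSubmonoid.closure Γ : Set ℝ) := by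
    rintro x (rfl | ⟨l, hl, γ, hγ, rfl⟩)
    · exact (AddSubmonoid.closure Γ).zero_mem
    · exact AddSubmonoid.sum_mem _ fun i _ => AddSubmonoid.subset_closure (hγ i)
  have hwfp : (plusSet Γ).IsWF := hclo.mono hsub
  -- Step 4 : DCC from well-foundedness
  intro f hf hanti
  have hr : (Set.range f).IsWF := hwfp.mono (by rintro x ⟨n, rfl⟩; exact hf n)
  have hne : (Set.range f).Nonempty := ⟨f 0, 0, rfl⟩
  obtain ⟨N, hNeq⟩ := hr.min_mem hne
  refine ⟨N, fun n hn => le_antisymm (hanti hn) ?_⟩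
  exact hNeq ▸ hr.min_le hne ⟨n, rfl⟩
end

section
/- Let K ⊆ ℝⁿ be a closed convex cone containing no lines. Then K equals the closure of the convex cone generated by its exposed rays. -/
/-- The ray `ℝ_{≥0} · v` spanned by a vector `v`. -/
def rayOf {E : Type*} [SMul ℝ E] (v : E) : Set E := {x | ∃ t : ℝ, 0 ≤ t ∧ x = t • v}

/-- A subset R of a convex cone K is an exposed ray of K if R = ℝ_{≥0}·v for some
nonzero v ∈ K and there is a linear functional H with H ≥ 0 on K whose zero locus
inside K is exactly R. -/
def IsExposedRay (n : ℕ) (K : ConvexCone ℝ (Fin n → ℝ)) (R : Set (Fin n → ℝ)) : Prop :=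
  ∃ v : Fin n → ℝ, v ≠ 0 ∧ v ∈ K ∧ R = rayOf v ∧
    ∃ H : (Fin n → ℝ) →ₗ[ℝ] ℝ, (∀ x ∈ K, 0 ≤ H x) ∧ {x | x ∈ K ∧ H x = 0} = R

/-!
If `x ∈ C` lay outside the closure `D` of the convex hull of the exposed points of a compact convex
set `C` in a Euclidean space, a hyperplane would separate `x` from `D`, so a point `y` far out on
the other side is strictly closer to every point of `D` than to `x`. The point of `C` farthest from
`y` is exposed by `⟪z - y, ·⟫`, hence lies in `D`: a contradiction.

For the cone, no lines means `-a ∉ K` for `a ∈ K` of norm one, so Farkas gives functionals that are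
nonnegative on `K` and positive at `a`; finitely many cover the compact set `K ∩ sphere 0 1`, and
their sum `f` satisfies `u ‖x‖ ≤ f x` on `K`. The slice `K ∩ {f = 1}` is then a compact convex base
of `K`, to which the above applies, and a point `b` of the base exposed by `l` spans a ray of `K`
exposed by `l b • f - l`.
-/

open Set Metric
open scoped RealInnerProductSpace

namespace InnerProductSpace

variable {E : Type*} [NormedAddCommGroup E] [InnerProductSpace ℝ E]

theorem mem_exposedPoints_of_isMaxOn_dist {C : Set E} {y z : E} (hz : z ∈ C)
    (hmax : IsMaxOn (dist · y) C z) : z ∈ C.exposedPoints ℝ := by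
  refine ⟨hz, innerSL ℝ (z - y), fun w hw => ?_⟩
  have hwz : ‖w - y‖ ≤ ‖z - y‖ := by simpa [dist_eq_norm] using hmax hw
  have hsq : ‖w - y‖ ^ 2 = ‖w - z‖ ^ 2 + 2 * ⟪z - y, w - z⟫ + ‖z - y‖ ^ 2 := by
    rw [real_inner_comm, ← norm_add_sq_real, sub_add_sub_cancel]
  have key : ‖w - z‖ ^ 2 + 2 * (⟪z - y, w⟫ - ⟪z - y, z⟫) ≤ 0 := by
    rw [← inner_sub_right]; nlinarith [norm_nonneg (w - y)]
  simp only [innerSL_apply_apply]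
  refine ⟨by nlinarith [sq_nonneg ‖w - z‖], fun h => ?_⟩
  have : ‖w - z‖ ^ 2 ≤ 0 := by linarith
  simpa [sub_eq_zero] using this

variable [CompleteSpace E]

theorem exists_subset_ball_dist_of_notMem {D : Set E} {x : E} (hconv : Convex ℝ D)
    (hclosed : IsClosed D) (hbdd : Bornology.IsBounded D) (hx : x ∉ D) :
    ∃ y, D ⊆ ball y (dist x y) := by
  obtain ⟨f, c, hfD, hfx⟩ := geometric_hahn_banach_closed_point hconv hclosed hx
  set e := (toDual ℝ E).symm f
  have he : ∀ w, ⟪e, w⟫ = f w := fun w => toDual_symm_apply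
  obtain ⟨M, hM⟩ := hbdd.subset_closedBall x
  set δ := f x - c
  have hδ : 0 < δ := sub_pos.2 hfx
  set t := (M ^ 2 + 1) / δ
  have ht : 0 < t := by positivity
  have htδ : t * δ = M ^ 2 + 1 := div_mul_cancel₀ _ hδ.ne'
  refine ⟨x - t • e, fun z hz => ?_⟩
  have hzx : ‖z - x‖ ≤ M := by simpa [dist_eq_norm] using hM hz
  have hez : ⟪e, z - x⟫ < -δ := by rw [inner_sub_right, he, he]; linarith [hfD z hz]
  have hsq : ‖z - (x - t • e)‖ ^ 2 = ‖z - x‖ ^ 2 + 2 * t * ⟪e, z - x⟫ + ‖t • e‖ ^ 2 := by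
    rw [sub_sub_eq_add_sub, add_sub_right_comm, norm_add_sq_real, real_inner_smul_right,
      real_inner_comm]
    ring
  rw [mem_ball, dist_eq_norm, dist_eq_norm, sub_sub_cancel]
  refine lt_of_pow_lt_pow_left₀ 2 (norm_nonneg _) ?_
  rw [hsq]
  nlinarith [norm_nonneg (z - x), mul_lt_mul_of_pos_left hez ht]

theorem closure_convexHull_exposedPoints {C : Set E} (hC : IsCompact C) (hconv : Convex ℝ C) :
    closure (convexHull ℝ (C.exposedPoints ℝ)) = C := by
  have hDC : closure (convexHull ℝ (C.exposedPoints ℝ)) ⊆ C :=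
    closure_minimal (convexHull_min exposedPoints_subset hconv) hC.isClosed
  refine hDC.antisymm fun x hx => by_contra fun hxD => ?_
  obtain ⟨y, hy⟩ := exists_subset_ball_dist_of_notMem (convex_convexHull ℝ _).closure
    isClosed_closure (hC.isBounded.subset hDC) hxD
  obtain ⟨z, hzC, hzmax⟩ :=
    hC.exists_isMaxOn ⟨x, hx⟩ (continuous_id.dist continuous_const).continuousOn
  have hzD := subset_closure (subset_convexHull ℝ _ (mem_exposedPoints_of_isMaxOn_dist hzC hzmax))
  exact (hzmax hx).not_gt (mem_ball.1 (hy hzD))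

end InnerProductSpace

section FiniteDimensional

variable {E F : Type*} [NormedAddCommGroup E] [NormedSpace ℝ E] [NormedAddCommGroup F]
  [NormedSpace ℝ F]

theorem ContinuousLinearEquiv.image_exposedPoints_subset (φ : E ≃L[ℝ] F) (C : Set E) :
    φ '' C.exposedPoints ℝ ⊆ (φ '' C).exposedPoints ℝ := by
  rintro _ ⟨x, ⟨hxC, l, hl⟩, rfl⟩
  refine ⟨mem_image_of_mem φ hxC, l.comp φ.symm.toContinuousLinearMap, ?_⟩
  rintro _ ⟨w, hw, rfl⟩
  simpa using hl w hw

theorem FiniteDimensional.closure_convexHull_exposedPoints [FiniteDimensional ℝ E] {C : Set E}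
    (hC : IsCompact C) (hconv : Convex ℝ C) :
    closure (convexHull ℝ (C.exposedPoints ℝ)) = C := by
  obtain ⟨φ⟩ : Nonempty (E ≃L[ℝ] EuclideanSpace ℝ (Fin (Module.finrank ℝ E))) :=
    FiniteDimensional.nonempty_continuousLinearEquiv_of_finrank_eq (by simp)
  refine (closure_minimal (convexHull_min exposedPoints_subset hconv) hC.isClosed).antisymm ?_
  have h := InnerProductSpace.closure_convexHull_exposedPoints (hC.image φ.continuous)
    (hconv.linear_image φ.toLinearMap)
  calc C = φ.symm '' closure (convexHull ℝ ((φ '' C).exposedPoints ℝ)) := by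
        rw [h, φ.symm_image_image]
    _ = closure (convexHull ℝ (φ.symm '' (φ '' C).exposedPoints ℝ)) := by
      rw [φ.symm.image_closure]
      exact congrArg closure (φ.symm.toLinearMap.image_convexHull _)
    _ ⊆ closure (convexHull ℝ (C.exposedPoints ℝ)) := by
      refine closure_mono (convexHull_mono ?_)
      simpa using φ.symm.image_exposedPoints_subset (φ '' C)

end FiniteDimensional

theorem PointedCone.mem_hull_iff_exists_fin {R E : Type*} [Semiring R] [PartialOrder R]
    [IsOrderedRing R] [AddCommMonoid E] [Module R E] {s : Set E} {x : E} :
    x ∈ PointedCone.hull R s ↔ ∃ (k : ℕ) (c : Fin k → R) (w : Fin k → E),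
      (∀ i, 0 ≤ c i) ∧ (∀ i, w i ∈ s) ∧ x = ∑ i, c i • w i := by
  rw [Submodule.mem_span_set']
  constructor
  · rintro ⟨k, c, w, rfl⟩
    exact ⟨k, fun i => c i, fun i => w i, fun i => (c i).2, fun i => (w i).2, rfl⟩
  · rintro ⟨k, c, w, hc, hw, rfl⟩
    exact ⟨k, fun i => ⟨c i, hc i⟩, fun i => ⟨w i, hw i⟩, rfl⟩

namespace ConvexCone

variable {E : Type*} [NormedAddCommGroup E] [NormedSpace ℝ E] {K : ConvexCone ℝ E}

theorem exists_dual_nonneg_of_notMem (hclosed : IsClosed (K : Set E)) (h0 : 0 ∈ K) {p : E}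
    (hp : p ∉ K) : ∃ f : StrongDual ℝ E, (∀ x ∈ K, 0 ≤ f x) ∧ f p < 0 :=
  ProperCone.hyperplane_separation_point ⟨K.toPointedCone h0, hclosed⟩ hp

theorem exists_dual_pos_on_sphere [FiniteDimensional ℝ E] (hclosed : IsClosed (K : Set E))
    (h0 : 0 ∈ K) (hnoline : ∀ x ∈ K, -x ∈ K → x = 0) :
    ∃ f : StrongDual ℝ E, ∀ x ∈ (K : Set E) ∩ sphere 0 1, 0 < f x := by
  have hsep (a : ↥((K : Set E) ∩ sphere 0 1)) :
      ∃ g : StrongDual ℝ E, (∀ x ∈ K, 0 ≤ g x) ∧ 0 < g a := by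
    obtain ⟨a, haK, ha1⟩ := a
    have hna : -a ∉ K := fun h => by simp [hnoline a haK h] at ha1
    obtain ⟨g, hgK, hga⟩ := exists_dual_nonneg_of_notMem hclosed h0 hna
    exact ⟨g, hgK, by simpa using hga⟩
  choose g hgK hga using hsep
  obtain ⟨t, ht⟩ := ((isCompact_sphere 0 1).inter_left hclosed).elim_finite_subcover
    (fun a => {x | 0 < g a x}) (fun a => isOpen_lt continuous_const (g a).continuous)
    (fun a ha => mem_iUnion.2 ⟨⟨a, ha⟩, hga ⟨a, ha⟩⟩)
  refine ⟨∑ a ∈ t, g a, fun x hx => ?_⟩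
  obtain ⟨a, hat, hax⟩ := mem_iUnion₂.1 (ht hx)
  simpa using Finset.sum_pos' (fun b _ => hgK b x hx.1) ⟨a, hat, hax⟩

theorem exists_dual_mul_norm_le [FiniteDimensional ℝ E] (hclosed : IsClosed (K : Set E))
    (h0 : 0 ∈ K) (hnoline : ∀ x ∈ K, -x ∈ K → x = 0) :
    ∃ f : StrongDual ℝ E, ∃ u > 0, ∀ x ∈ K, u * ‖x‖ ≤ f x := by
  obtain ⟨f, hf⟩ := exists_dual_pos_on_sphere hclosed h0 hnoline
  obtain ⟨u, hu, hfu⟩ := ((isCompact_sphere 0 1).inter_left hclosed).exists_forall_le'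
    f.continuous.continuousOn hf
  refine ⟨f, u, hu, fun x hx => ?_⟩
  rcases eq_or_ne x 0 with rfl | hx0
  · simp
  have hxn : 0 < ‖x‖ := norm_pos_iff.2 hx0
  have h := hfu (‖x‖⁻¹ • x) ⟨K.smul_mem (inv_pos.2 hxn) hx, by simp [norm_smul, hxn.ne']⟩
  rw [map_smul, smul_eq_mul] at h
  calc u * ‖x‖ ≤ ‖x‖⁻¹ * f x * ‖x‖ := by gcongr
    _ = f x := by field_simp

def slice (K : ConvexCone ℝ E) (f : StrongDual ℝ E) : Set E := K ∩ f ⁻¹' {1}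

theorem inv_smul_mem_slice {f : StrongDual ℝ E} {x : E} (hx : x ∈ K) (hfx : 0 < f x) :
    (f x)⁻¹ • x ∈ K.slice f :=
  ⟨K.smul_mem (inv_pos.2 hfx) hx, by simp [hfx.ne']⟩

theorem convex_slice (K : ConvexCone ℝ E) (f : StrongDual ℝ E) : Convex ℝ (K.slice f) :=
  K.convex.inter ((convex_singleton 1).linear_preimage f.toLinearMap)

theorem isCompact_slice [FiniteDimensional ℝ E] {f : StrongDual ℝ E} {u : ℝ}
    (hclosed : IsClosed (K : Set E)) (hu : 0 < u) (hfu : ∀ x ∈ K, u * ‖x‖ ≤ f x) :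
    IsCompact (K.slice f) := by
  refine isCompact_of_isClosed_isBounded
    (hclosed.inter (isClosed_singleton.preimage f.continuous)) ?_
  refine (isBounded_closedBall (x := 0) (r := u⁻¹)).subset fun x ⟨hxK, hfx⟩ => ?_
  rw [mem_closedBall_zero_iff, ← one_div, le_div_iff₀' hu]
  simpa [show f x = 1 from hfx] using hfu x hxK

theorem exists_exposing_of_mem_exposedPoints_slice {f : StrongDual ℝ E} (h0 : 0 ∈ K)
    (hpos : ∀ x ∈ K, x ≠ 0 → 0 < f x) {b : E} (hb : b ∈ (K.slice f).exposedPoints ℝ) :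
    ∃ H : E →ₗ[ℝ] ℝ, (∀ x ∈ K, 0 ≤ H x) ∧ {x | x ∈ K ∧ H x = 0} = rayOf b := by
  obtain ⟨⟨hbK, hfb⟩, l, hl⟩ := hb
  replace hfb : f b = 1 := hfb
  set H : E →ₗ[ℝ] ℝ := l b • (f : E →ₗ[ℝ] ℝ) - l
  have hH (x : E) (hfx : 0 < f x) : H x = f x * (l b - l ((f x)⁻¹ • x)) := by
    simp only [H, LinearMap.sub_apply, LinearMap.smul_apply, map_smul, smul_eq_mul]
    field_simp
    rfl
  refine ⟨H, fun x hx => ?_, ?_⟩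
  · rcases eq_or_ne x 0 with rfl | hx0
    · simp
    have hfx := hpos x hx hx0
    rw [hH x hfx]
    exact mul_nonneg hfx.le (sub_nonneg.2 (hl _ (inv_smul_mem_slice hx hfx)).1)
  ext x
  constructor
  · rintro ⟨hx, hHx⟩
    rcases eq_or_ne x 0 with rfl | hx0
    · exact ⟨0, le_rfl, by simp⟩
    have hfx := hpos x hx hx0
    rw [hH x hfx, mul_eq_zero, sub_eq_zero] at hHx
    have hxb : (f x)⁻¹ • x = b :=
      (hl _ (inv_smul_mem_slice hx hfx)).2 (hHx.resolve_left hfx.ne').le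
    exact ⟨f x, hfx.le, by rw [← hxb, smul_inv_smul₀ hfx.ne']⟩
  · rintro ⟨t, ht, rfl⟩
    refine ⟨(K.toPointedCone h0).smul_mem ht hbK, ?_⟩
    simp [H, hfb]

theorem subset_closure_hull_exposedPoints_slice [FiniteDimensional ℝ E] {f : StrongDual ℝ E}
    (hpos : ∀ x ∈ K, x ≠ 0 → 0 < f x) (hcpt : IsCompact (K.slice f)) :
    (K : Set E) ⊆ closure (PointedCone.hull ℝ ((K.slice f).exposedPoints ℝ)) := by
  intro x hx
  rcases eq_or_ne x 0 with rfl | hx0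
  · exact subset_closure (zero_mem _)
  have hfx := hpos x hx hx0
  have hx₀ : (f x)⁻¹ • x ∈ closure (PointedCone.hull ℝ ((K.slice f).exposedPoints ℝ)) := by
    refine closure_mono (convexHull_min PointedCone.subset_hull (PointedCone.convex _)) ?_
    rw [FiniteDimensional.closure_convexHull_exposedPoints hcpt (K.convex_slice f)]
    exact inv_smul_mem_slice hx hfx
  simpa [smul_inv_smul₀ hfx.ne'] using map_mem_closure (continuous_const_smul (f x)) hx₀
    fun y hy => PointedCone.smul_mem _ hfx.le hy

end ConvexCone

/-- (Straszewicz's theorem for cones.) A closed convex cone K ⊆ ℝⁿ containing no lines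
equals the closure of the convex cone generated by its exposed rays, i.e. the closure of
the set of all finite nonnegative linear combinations of vectors lying on exposed rays. -/
theorem stmt_4 (n : ℕ) (K : ConvexCone ℝ (Fin n → ℝ))
    (hclosed : IsClosed (K : Set (Fin n → ℝ)))
    (h0 : (0 : Fin n → ℝ) ∈ K)
    (hnoline : ∀ x, x ∈ K → -x ∈ K → x = 0) :
    (K : Set (Fin n → ℝ)) =
      closure {x | ∃ (k : ℕ) (c : Fin k → ℝ) (w : Fin k → (Fin n → ℝ)),
        (∀ i, 0 ≤ c i) ∧ (∀ i, ∃ R, IsExposedRay n K R ∧ w i ∈ R) ∧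
        x = ∑ i, c i • w i} := by
  obtain ⟨f, u, hu, hfu⟩ := K.exists_dual_mul_norm_le hclosed h0 hnoline
  have hpos : ∀ x ∈ K, x ≠ 0 → 0 < f x := fun x hx hx0 =>
    (mul_pos hu (norm_pos_iff.2 hx0)).trans_le (hfu x hx)
  suffices (K : Set (Fin n → ℝ)) =
      closure (PointedCone.hull ℝ {w | ∃ R, IsExposedRay n K R ∧ w ∈ R} : Set (Fin n → ℝ)) by
    convert this using 2
    ext x
    exact Iff.symm PointedCone.mem_hull_iff_exists_fin
  refine subset_antisymm ?_ (closure_minimal ?_ hclosed)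
  · refine (K.subset_closure_hull_exposedPoints_slice hpos (K.isCompact_slice hclosed hu hfu)).trans
      (closure_mono (Submodule.span_mono fun b hb => ⟨rayOf b, ?_, 1, zero_le_one, by simp⟩))
    obtain ⟨H, hH⟩ := K.exists_exposing_of_mem_exposedPoints_slice h0 hpos hb
    have hb1 : f b = 1 := hb.1.2
    exact ⟨b, fun hb0 => by simp [hb0] at hb1, hb.1.1, rfl, H, hH⟩
  · refine (Submodule.span_le (p := K.toPointedCone h0)).2 ?_
    rintro _ ⟨R, ⟨v, -, hvK, rfl, -⟩, t, ht, rfl⟩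
    exact (K.toPointedCone h0).smul_mem ht hvK
end

section
/- Let φ: ℝ^m → ℝⁿ be a linear map, C ⊆ ℝ^m a closed convex cone containing no lines, and R a nonzero extremal ray of the convex cone φ(C). Then there exists an extremal ray R′ of C such that φ(R′) = R. -/
/-!
Intersect `C` with `φ⁻¹(ℝ≥0 w)`: this is again a closed pointed cone `D`, and since `ℝ≥0 w` is
extremal in `φ(C)`, every extremal ray of `D` is extremal in `C`. A pointed closed cone has a
functional `f` positive on `D ∖ {0}`, so `D` has the compact convex base `D ∩ {f = 1}`, whose extreme
points span exactly extremal rays of `D`. By Krein–Milman these extreme points cannot all lie in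
`ker φ`, because `D` contains a preimage of `w`; an extreme point `b` with `φ b ≠ 0` then has
`φ(ℝ≥0 b) = ℝ≥0 w`.
-/

open Set

section Ray

variable {E F : Type*} [AddCommGroup E] [Module ℝ E] [AddCommGroup F] [Module ℝ F]

lemma mem_rayOf_self (v : E) : v ∈ rayOf v := ⟨1, zero_le_one, (one_smul ℝ v).symm⟩

lemma zero_mem_rayOf (v : E) : (0 : E) ∈ rayOf v := ⟨0, le_rfl, (zero_smul ℝ v).symm⟩

lemma smul_mem_rayOf {v x : E} {c : ℝ} (hc : 0 ≤ c) (hx : x ∈ rayOf v) : c • x ∈ rayOf v := by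
  obtain ⟨t, ht, rfl⟩ := hx
  exact ⟨c * t, mul_nonneg hc ht, smul_smul c t v⟩

lemma add_mem_rayOf {v x y : E} (hx : x ∈ rayOf v) (hy : y ∈ rayOf v) : x + y ∈ rayOf v := by
  obtain ⟨s, hs, rfl⟩ := hx
  obtain ⟨t, ht, rfl⟩ := hy
  exact ⟨s + t, add_nonneg hs ht, (add_smul s t v).symm⟩

lemma rayOf_subset_of_mem {v x : E} (hx : x ∈ rayOf v) : rayOf x ⊆ rayOf v := by
  rintro _ ⟨t, ht, rfl⟩
  exact smul_mem_rayOf ht hx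

lemma rayOf_eq_of_mem {v x : E} (hx : x ∈ rayOf v) (hx0 : x ≠ 0) : rayOf x = rayOf v := by
  refine (rayOf_subset_of_mem hx).antisymm (rayOf_subset_of_mem ?_)
  obtain ⟨t, ht, rfl⟩ := hx
  have ht0 : t ≠ 0 := by rintro rfl; exact hx0 (zero_smul ℝ v)
  exact ⟨t⁻¹, inv_nonneg.2 ht, (inv_smul_smul₀ ht0 v).symm⟩

lemma image_rayOf (φ : E →ₗ[ℝ] F) (v : E) : φ '' rayOf v = rayOf (φ v) := by
  ext y
  constructor
  · rintro ⟨_, ⟨t, ht, rfl⟩, rfl⟩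
    exact ⟨t, ht, map_smul φ t v⟩
  · rintro ⟨t, ht, rfl⟩
    exact ⟨t • v, ⟨t, ht, rfl⟩, map_smul φ t v⟩

lemma rayOf_eq_image_Ici (v : E) : rayOf v = (· • v) '' Ici (0 : ℝ) := by
  ext
  simp [rayOf, eq_comm]

variable [TopologicalSpace E] [IsTopologicalAddGroup E] [ContinuousSMul ℝ E]

lemma isClosed_rayOf [T2Space E] (v : E) : IsClosed (rayOf v) := by
  rw [rayOf_eq_image_Ici]
  exact isClosedMap_smul_left v _ isClosed_Ici

def rayCone [T2Space E] (v : E) : ProperCone ℝ E where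
  carrier := rayOf v
  add_mem' := add_mem_rayOf
  zero_mem' := zero_mem_rayOf v
  smul_mem' c _ hx := smul_mem_rayOf c.2 hx
  isClosed' := isClosed_rayOf v

end Ray

def IsExtremalRay {E : Type*} [AddCommGroup E] [Module ℝ E] (K : Set E) (v : E) : Prop :=
  v ≠ 0 ∧ v ∈ K ∧ ∀ x y, x ∈ K → y ∈ K → x + y ∈ rayOf v → x ∈ rayOf v ∧ y ∈ rayOf v

lemma IsExtremalRay.of_inter_preimage {E F : Type*} [AddCommGroup E] [Module ℝ E]
    [AddCommGroup F] [Module ℝ F] {C : Set E} {φ : E →ₗ[ℝ] F} {v : E} {w : F}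
    (hext : ∀ x y, x ∈ φ '' C → y ∈ φ '' C → x + y ∈ rayOf w → x ∈ rayOf w ∧ y ∈ rayOf w)
    (hv : IsExtremalRay (C ∩ φ ⁻¹' rayOf w) v) : IsExtremalRay C v := by
  obtain ⟨hv0, ⟨hvC, hφv⟩, hvext⟩ := hv
  refine ⟨hv0, hvC, fun x y hx hy hxy => ?_⟩
  have hφxy : φ x + φ y ∈ rayOf w := by
    rw [← map_add]
    exact rayOf_subset_of_mem hφv (image_rayOf φ v ▸ mem_image_of_mem φ hxy)
  obtain ⟨hφx, hφy⟩ := hext _ _ (mem_image_of_mem φ hx) (mem_image_of_mem φ hy) hφxy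
  exact hvext x y ⟨hx, hφx⟩ ⟨hy, hφy⟩ hxy

theorem IsCompact.exists_mem_extremePoints_notMem {E : Type*} [AddCommGroup E] [Module ℝ E]
    [TopologicalSpace E] [T2Space E] [IsTopologicalAddGroup E] [ContinuousSMul ℝ E]
    [LocallyConvexSpace ℝ E] {s t : Set E} (hs : IsCompact s) (hsc : Convex ℝ s)
    (ht : IsClosed t) (htc : Convex ℝ t) (hst : ¬s ⊆ t) : ∃ x ∈ s.extremePoints ℝ, x ∉ t := by
  contrapose! hst
  rw [← closure_convexHull_extremePoints hs hsc]
  exact closure_minimal (convexHull_min hst htc) ht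

namespace ProperCone

variable {E : Type*} [NormedAddCommGroup E] [NormedSpace ℝ E] {K : ProperCone ℝ E}
  {f : E →L[ℝ] ℝ}

/-- Farkas' lemma separates each nonzero `x ∈ K` from `K` by a functional positive at `x`;
by compactness of the unit sphere of `K`, a finite sum of these is positive on all of it. -/
theorem exists_forall_pos_of_salient [FiniteDimensional ℝ E]
    (hK : (K : ConvexCone ℝ E).Salient) : ∃ f : E →L[ℝ] ℝ, ∀ x ∈ K, x ≠ 0 → 0 < f x := by
  have hsep : ∀ x ∈ K, x ≠ 0 → ∃ f : E →L[ℝ] ℝ, (∀ y ∈ K, 0 ≤ f y) ∧ 0 < f x := by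
    intro x hx hx0
    obtain ⟨f, hfK, hfx⟩ := K.hyperplane_separation_point (hK x hx hx0)
    exact ⟨f, hfK, by simpa using hfx⟩
  have hS : IsCompact ((K : Set E) ∩ Metric.sphere 0 1) :=
    (isCompact_sphere 0 1).inter_left K.isClosed
  obtain ⟨t, htK, ht, hcover⟩ := hS.elim_finite_subcover_image
    (b := {f : E →L[ℝ] ℝ | ∀ y ∈ K, 0 ≤ f y}) (c := fun f => {y | 0 < f y})
    (fun f _ => isOpen_lt continuous_const f.continuous) fun x ⟨hxK, hx1⟩ => by
      obtain ⟨f, hfK, hfx⟩ := hsep x hxK (ne_zero_of_mem_unit_sphere ⟨x, hx1⟩)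
      exact mem_biUnion hfK hfx
  refine ⟨∑ g ∈ ht.toFinset, g, fun x hx hx0 => ?_⟩
  have hx0' : 0 < ‖x‖ := norm_pos_iff.2 hx0
  obtain ⟨g, hgt, hgx⟩ := mem_iUnion₂.1 (hcover ⟨K.smul_mem hx (inv_nonneg.2 hx0'.le),
    by simp [norm_smul, hx0'.ne']⟩)
  rw [_root_.sum_apply]
  refine Finset.sum_pos' (fun g hg => htK (ht.mem_toFinset.1 hg) x hx)
    ⟨g, ht.mem_toFinset.2 hgt, ?_⟩
  simp only [mem_ofPred_eq, map_smul, smul_eq_mul] at hgx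
  exact pos_of_mul_pos_right hgx (inv_nonneg.2 hx0'.le)

lemma inv_smul_mem_inter_preimage_one {x : E} (hx : x ∈ K) (hfx : 0 < f x) :
    (f x)⁻¹ • x ∈ (K : Set E) ∩ f ⁻¹' {1} :=
  ⟨K.smul_mem hx (inv_nonneg.2 hfx.le), by simp [hfx.ne']⟩

theorem isCompact_inter_preimage_one [FiniteDimensional ℝ E]
    (hf : ∀ x ∈ K, x ≠ 0 → 0 < f x) : IsCompact ((K : Set E) ∩ f ⁻¹' {1}) := by
  have hS : IsCompact ((K : Set E) ∩ Metric.sphere 0 1) :=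
    (isCompact_sphere 0 1).inter_left K.isClosed
  have hfS : ∀ y ∈ (K : Set E) ∩ Metric.sphere 0 1, 0 < f y := fun y hy =>
    hf y hy.1 (ne_zero_of_mem_unit_sphere ⟨y, hy.2⟩)
  have hcont : ContinuousOn (fun y => (f y)⁻¹ • y) ((K : Set E) ∩ Metric.sphere 0 1) :=
    (f.continuous.continuousOn.inv₀ fun y hy => (hfS y hy).ne').smul continuousOn_id
  refine (hS.image_of_continuousOn hcont).of_isClosed_subset
    (K.isClosed.inter (isClosed_singleton.preimage f.continuous)) ?_
  rintro x ⟨hxK, hfx⟩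
  have hx0 : x ≠ 0 := by rintro rfl; simp at hfx
  refine ⟨‖x‖⁻¹ • x, ⟨K.smul_mem hxK (by positivity), by simp [norm_smul, hx0]⟩, ?_⟩
  simp_all [smul_smul]

lemma convex_inter_preimage_one : Convex ℝ ((K : Set E) ∩ f ⁻¹' {1}) :=
  K.convex.inter ((convex_singleton 1).linear_preimage f.toLinearMap)

theorem isExtremalRay_of_mem_extremePoints (hf : ∀ x ∈ K, x ≠ 0 → 0 < f x) {b : E}
    (hb : b ∈ ((K : Set E) ∩ f ⁻¹' {1}).extremePoints ℝ) : IsExtremalRay K b := by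
  obtain ⟨hbK, hfb : f b = 1⟩ := hb.1
  refine ⟨by rintro rfl; simp at hfb, hbK, fun x y hx hy hxy => ?_⟩
  rcases eq_or_ne x 0 with rfl | hx0
  · exact ⟨zero_mem_rayOf b, by simpa using hxy⟩
  rcases eq_or_ne y 0 with rfl | hy0
  · exact ⟨by simpa using hxy, zero_mem_rayOf b⟩
  obtain ⟨t, -, hxy⟩ := hxy
  have hfx := hf x hx hx0
  have hfy := hf y hy hy0
  obtain rfl : f x + f y = t := by simpa [hfb] using congr_arg f hxy
  have hseg : b ∈ openSegment ℝ ((f x)⁻¹ • x) ((f y)⁻¹ • y) := by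
    refine ⟨f x / (f x + f y), f y / (f x + f y), by positivity, by positivity, by field_simp, ?_⟩
    have hweight : ∀ a : ℝ, a ≠ 0 → a / (f x + f y) * a⁻¹ = (f x + f y)⁻¹ := fun a ha => by
      field_simp
    rw [smul_smul, smul_smul, hweight _ hfx.ne', hweight _ hfy.ne', ← smul_add, hxy,
      inv_smul_smul₀ (by positivity)]
  obtain ⟨hxb, hyb⟩ := (mem_extremePoints.1 hb).2 _ (inv_smul_mem_inter_preimage_one hx hfx) _
    (inv_smul_mem_inter_preimage_one hy hfy) hseg
  exact ⟨⟨f x, hfx.le, by rw [← hxb, smul_inv_smul₀ hfx.ne']⟩,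
    ⟨f y, hfy.le, by rw [← hyb, smul_inv_smul₀ hfy.ne']⟩⟩

theorem exists_isExtremalRay_apply_ne_zero [FiniteDimensional ℝ E] {F : Type*} [AddCommGroup F]
    [Module ℝ F] (hK : (K : ConvexCone ℝ E).Salient) (φ : E →ₗ[ℝ] F) {u : E} (hu : u ∈ K)
    (hφu : φ u ≠ 0) : ∃ v, IsExtremalRay K v ∧ φ v ≠ 0 := by
  obtain ⟨f, hf⟩ := exists_forall_pos_of_salient hK
  have hfu : 0 < f u := hf u hu fun h => hφu (by rw [h, map_zero])
  have hslice : ¬(K : Set E) ∩ f ⁻¹' {1} ⊆ LinearMap.ker φ := fun h => hφu <| by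
    simpa [hfu.ne'] using h (inv_smul_mem_inter_preimage_one hu hfu)
  obtain ⟨b, hb, hφb⟩ := (isCompact_inter_preimage_one hf).exists_mem_extremePoints_notMem
    convex_inter_preimage_one (LinearMap.ker φ).closed_of_finiteDimensional
    (LinearMap.ker φ).convex hslice
  exact ⟨b, isExtremalRay_of_mem_extremePoints hf hb, hφb⟩

end ProperCone

/-- Let φ : ℝ^m → ℝⁿ be a linear map, C ⊆ ℝ^m a closed convex cone containing no lines,
and R = ℝ_{≥0}·w a nonzero extremal ray of the image cone φ(C). Then there exists an
extremal ray R′ of C with φ(R′) = R. -/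
theorem stmt_6 (m n : ℕ) (φ : (Fin m → ℝ) →ₗ[ℝ] (Fin n → ℝ))
    (C : ConvexCone ℝ (Fin m → ℝ))
    (hclosed : IsClosed (C : Set (Fin m → ℝ)))
    (h0 : (0 : Fin m → ℝ) ∈ C)
    (hnoline : ∀ x, x ∈ C → -x ∈ C → x = 0)
    (w : Fin n → ℝ) (hw : w ≠ 0) (hwim : w ∈ φ '' (C : Set (Fin m → ℝ)))
    (hext : ∀ x y, x ∈ φ '' (C : Set (Fin m → ℝ)) → y ∈ φ '' (C : Set (Fin m → ℝ)) →
      x + y ∈ rayOf w → x ∈ rayOf w ∧ y ∈ rayOf w) :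
    ∃ v : Fin m → ℝ, v ≠ 0 ∧ v ∈ C ∧
      (∀ x y, x ∈ C → y ∈ C → x + y ∈ rayOf v → x ∈ rayOf v ∧ y ∈ rayOf v) ∧
      φ '' rayOf v = rayOf w := by
  obtain ⟨u, huC, rfl⟩ := hwim
  let D : ProperCone ℝ (Fin m → ℝ) :=
    (⟨C.toPointedCone h0, hclosed⟩ : ProperCone ℝ _) ⊓
      (rayCone (φ u)).comap φ.toContinuousLinearMap
  have hD : (D : ConvexCone ℝ (Fin m → ℝ)).Salient := fun x ⟨hxC, _⟩ hx0 ⟨hnxC, _⟩ =>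
    hx0 (hnoline x hxC hnxC)
  obtain ⟨v, hv, hφv⟩ := D.exists_isExtremalRay_apply_ne_zero hD φ ⟨huC, mem_rayOf_self _⟩ hw
  obtain ⟨hv0, hvC, hvext⟩ := hv.of_inter_preimage hext
  have hφvw : φ v ∈ rayOf (φ u) := hv.2.1.2
  exact ⟨v, hv0, hvC, hvext, by rw [image_rayOf, rayOf_eq_of_mem hφvw hφv]⟩
end

section
/- Let C ⊆ ℝⁿ be a closed convex cone containing no lines, D: ℝⁿ → ℝ a linear functional, and R an exposed ray of C on which D is strictly negative (i.e. D(r) < 0 for all r ∈ R \ {0}). Let H be a supporting functional of R, i.e. H ≥ 0 on C and {x ∈ C : H(x) = 0} = R. Then there exist a real number t > 0 and a linear functional A lying in the interior of the dual cone C* such that t·H = D + A; in particular D + A is nonnegative on C and vanishes on C exactly along R. -/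
open scoped InnerProductSpace

/-- The dual cone of a set s in Euclidean space, identifying linear functionals with
vectors via the inner product. -/
def dualCone (n : ℕ) (s : Set (EuclideanSpace ℝ (Fin n))) : Set (EuclideanSpace ℝ (Fin n)) :=
  {y | ∀ x ∈ s, 0 ≤ ⟪x, y⟫_ℝ}

/-- Let C ⊆ ℝⁿ be a closed convex cone containing no lines, D a linear functional, and
R an exposed ray of C on which D is strictly negative, with supporting functional H
(H ≥ 0 on C, {x ∈ C : H(x) = 0} = R). Then there exist t > 0 and a functional A in the
interior of the dual cone C* such that t·H = D + A; in particular D + A is nonnegative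
on C and vanishes on C exactly along R. (Functionals are identified with vectors.) -/
theorem stmt_9 (n : ℕ) (C : ConvexCone ℝ (EuclideanSpace ℝ (Fin n)))
    (hclosed : IsClosed (C : Set (EuclideanSpace ℝ (Fin n))))
    (h0 : (0 : EuclideanSpace ℝ (Fin n)) ∈ C)
    (hnoline : ∀ x, x ∈ C → -x ∈ C → x = 0)
    (d : EuclideanSpace ℝ (Fin n))
    (v : EuclideanSpace ℝ (Fin n)) (hv : v ≠ 0) (hvC : v ∈ C)
    (R : Set (EuclideanSpace ℝ (Fin n))) (hR : R = rayOf v)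
    (hDneg : ∀ x ∈ R, x ≠ 0 → ⟪d, x⟫_ℝ < 0)
    (h : EuclideanSpace ℝ (Fin n))
    (hHnonneg : ∀ x ∈ C, 0 ≤ ⟪h, x⟫_ℝ)
    (hHzero : {x | x ∈ C ∧ ⟪h, x⟫_ℝ = 0} = R) :
    ∃ t : ℝ, 0 < t ∧
      ∃ a ∈ interior (dualCone n (C : Set (EuclideanSpace ℝ (Fin n)))),
        t • h = d + a ∧ (∀ x ∈ C, 0 ≤ ⟪d + a, x⟫_ℝ) ∧
        {x | x ∈ C ∧ ⟪d + a, x⟫_ℝ = 0} = R := by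
  classical
  set K : Set (EuclideanSpace ℝ (Fin n)) :=
    (C : Set (EuclideanSpace ℝ (Fin n))) ∩ Metric.sphere 0 1 with hKdef
  have hKcomp : IsCompact K :=
    (isCompact_sphere (0 : EuclideanSpace ℝ (Fin n)) 1).inter_left hclosed
  have hnorm1 : ∀ x : EuclideanSpace ℝ (Fin n), x ≠ 0 → ‖(‖x‖⁻¹ • x)‖ = 1 := by
    intro x hx
    rw [norm_smul, norm_inv, norm_norm, inv_mul_cancel₀ (norm_ne_zero_iff.mpr hx)]
  have hmemK : ∀ x : EuclideanSpace ℝ (Fin n), x ∈ C → x ≠ 0 → (‖x‖⁻¹ • x) ∈ K := by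
    intro x hxC hx
    refine ⟨C.smul_mem (inv_pos.mpr (norm_pos_iff.mpr hx)) hxC, ?_⟩
    simp [mem_sphere_zero_iff_norm, hnorm1 x hx]
  -- cover K by open sets indexed by ℕ
  have hUopen : ∀ t : ℕ, IsOpen {x : EuclideanSpace ℝ (Fin n) |
      ⟪d, x⟫_ℝ - (t : ℝ) * ⟪h, x⟫_ℝ < 0} := by
    intro t
    exact isOpen_lt (((continuous_const.inner continuous_id).sub
      (continuous_const.mul (continuous_const.inner continuous_id)))) continuous_const
  have hcover : K ⊆ ⋃ t : ℕ, {x : EuclideanSpace ℝ (Fin n) |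
      ⟪d, x⟫_ℝ - (t : ℝ) * ⟪h, x⟫_ℝ < 0} := by
    intro x hx
    rcases hx with ⟨hxC, hxS⟩
    have hx0 : x ≠ 0 := by
      intro hx0
      rw [mem_sphere_zero_iff_norm] at hxS
      rw [hx0] at hxS; simp at hxS
    have hh : 0 ≤ ⟪h, x⟫_ℝ := hHnonneg x hxC
    rcases eq_or_lt_of_le hh with heq | hlt
    · -- h vanishes, so x ∈ R and d is negative there
      have hxR : x ∈ R := by rw [← hHzero]; exact ⟨hxC, heq.symm⟩
      have := hDneg x hxR hx0
      exact Set.mem_iUnion.mpr ⟨0, by simpa using this⟩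
    · obtain ⟨t, ht⟩ := exists_nat_gt (⟪d, x⟫_ℝ / ⟪h, x⟫_ℝ)
      refine Set.mem_iUnion.mpr ⟨t, ?_⟩
      have : ⟪d, x⟫_ℝ < (t : ℝ) * ⟪h, x⟫_ℝ := by
        rw [div_lt_iff₀ hlt] at ht; linarith
      simpa using sub_neg.mpr this
  obtain ⟨s, hs⟩ := hKcomp.elim_finite_subcover _ hUopen hcover
  set T : ℕ := s.sup id + 1 with hTdef
  have hTpos : (0 : ℝ) < (T : ℝ) := by positivity
  have hkey : ∀ x ∈ K, ⟪d, x⟫_ℝ < (T : ℝ) * ⟪h, x⟫_ℝ := by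
    intro x hxK
    obtain ⟨t, hts, hxt⟩ := Set.mem_iUnion₂.mp (hs hxK)
    have hh : 0 ≤ ⟪h, x⟫_ℝ := hHnonneg x hxK.1
    have htT : (t : ℝ) ≤ (T : ℝ) := by
      exact_mod_cast Nat.le_succ_of_le (Finset.le_sup (f := id) hts)
    have h1 : ⟪d, x⟫_ℝ < (t : ℝ) * ⟪h, x⟫_ℝ := by
      have := hxt; simp only [Set.mem_setOf_eq] at this; linarith
    calc ⟪d, x⟫_ℝ < (t : ℝ) * ⟪h, x⟫_ℝ := h1
      _ ≤ (T : ℝ) * ⟪h, x⟫_ℝ := mul_le_mul_of_nonneg_right htT hh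
  set a : EuclideanSpace ℝ (Fin n) := (T : ℝ) • h - d with hadef
  have hapos : ∀ x ∈ K, 0 < ⟪x, a⟫_ℝ := by
    intro x hxK
    have := hkey x hxK
    rw [hadef, real_inner_comm, inner_sub_left, real_inner_smul_left]
    linarith [real_inner_comm h x, real_inner_comm d x]
  -- K is nonempty
  have hKne : K.Nonempty := ⟨‖v‖⁻¹ • v, hmemK v hvC hv⟩
  -- minimum of ⟪·, a⟫ over K
  obtain ⟨x₀, hx₀K, hmin⟩ := hKcomp.exists_isMinOn hKne
    (show ContinuousOn (fun x : EuclideanSpace ℝ (Fin n) => ⟪x, a⟫_ℝ) K from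
      (continuous_id.inner continuous_const).continuousOn)
  set m : ℝ := ⟪x₀, a⟫_ℝ with hmdef
  have hmpos : 0 < m := hapos x₀ hx₀K
  -- the ball of radius m around a lies in the dual cone
  have hball : Metric.ball a m ⊆ dualCone n (C : Set (EuclideanSpace ℝ (Fin n))) := by
    intro y hy x hxC
    rcases eq_or_ne x 0 with rfl | hx0
    · simp
    · set u : EuclideanSpace ℝ (Fin n) := ‖x‖⁻¹ • x with hudef
      have huK : u ∈ K := hmemK x hxC hx0
      have hu1 : ‖u‖ = 1 := hnorm1 x hx0
      have h1 : m ≤ ⟪u, a⟫_ℝ := hmin huK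
      have h2 : |⟪u, y - a⟫_ℝ| ≤ ‖y - a‖ := by
        calc |⟪u, y - a⟫_ℝ| ≤ ‖u‖ * ‖y - a‖ := abs_real_inner_le_norm u (y - a)
          _ = ‖y - a‖ := by rw [hu1, one_mul]
      have hdist : ‖y - a‖ < m := by
        rw [← dist_eq_norm]; exact Metric.mem_ball.mp hy
      have huy : 0 < ⟪u, y⟫_ℝ := by
        have : ⟪u, y⟫_ℝ = ⟪u, a⟫_ℝ + ⟪u, y - a⟫_ℝ := by
          rw [← inner_add_right]; congr 1; abel
        rw [this]
        have := abs_le.mp h2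
        linarith
      have hxu : x = ‖x‖ • u := by
        rw [hudef, smul_smul, mul_inv_cancel₀ (norm_ne_zero_iff.mpr hx0), one_smul]
      rw [hxu, real_inner_smul_left]
      positivity
  have haint : a ∈ interior (dualCone n (C : Set (EuclideanSpace ℝ (Fin n)))) :=
    interior_maximal hball Metric.isOpen_ball (Metric.mem_ball_self hmpos)
  refine ⟨(T : ℝ), hTpos, a, haint, by rw [hadef]; abel, ?_, ?_⟩
  · intro x hxC
    have : ⟪d + a, x⟫_ℝ = (T : ℝ) * ⟪h, x⟫_ℝ := by
      rw [hadef]; rw [show d + ((T : ℝ) • h - d) = (T : ℝ) • h by abel, real_inner_smul_left]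
    rw [this]
    exact mul_nonneg hTpos.le (hHnonneg x hxC)
  · rw [← hHzero]
    ext x
    simp only [Set.mem_setOf_eq]
    have heq : ⟪d + a, x⟫_ℝ = (T : ℝ) * ⟪h, x⟫_ℝ := by
      rw [hadef, show d + ((T : ℝ) • h - d) = (T : ℝ) • h by abel, real_inner_smul_left]
    constructor
    · rintro ⟨hxC, hx0⟩
      rw [heq] at hx0
      exact ⟨hxC, by
        rcases mul_eq_zero.mp hx0 with h | h
        · exact absurd h hTpos.ne'
        · exact h⟩
    · rintro ⟨hxC, hx0⟩
      exact ⟨hxC, by rw [heq, hx0, mul_zero]⟩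
end

section
/- Let C ⊆ ℝⁿ be a closed convex cone, V ⊆ C a closed convex subcone, and v ∈ ℚⁿ a nonzero rational vector with ray R = ℝ_{≥0}·v, such that C = V + R and v ∉ V. Suppose there exists a linear functional H with H(v) = 0 and H(x) > 0 for all x ∈ V \ {0}. Then there exists a linear functional H′ with rational coefficients such that H′(v) = 0 and H′(x) > 0 for all x ∈ V \ {0}; consequently H′ ≥ 0 on C and {x ∈ C : H′(x) = 0} = R. -/
/-!
Identify functionals with coefficient vectors via the dot product. Positivity on `V \ {0}` is
positivity on the compact set `V ∩ S¹`, an open condition on the coefficients. The orthogonal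
projection `q ↦ q - (q ⬝ v / v ⬝ v) v` onto `v^⊥` is continuous, fixes the coefficients `w` of `H`,
and maps rational vectors to rational vectors because `v` is rational; so the projections of the
rational vectors close to `w` are rational, vanish at `v`, and are still positive on `V \ {0}`.
Since `C = V + ℝ≥0 v`, such a functional is `≥ 0` on `C` with zero set exactly the ray.
-/

open Set Pointwise

section Positivity

variable {ι : Type*} [Fintype ι]

theorem isOpen_setOf_forall_dotProduct_pos {K : Set (ι → ℝ)} (hK : IsCompact K) :
    IsOpen {w : ι → ℝ | ∀ x ∈ K, 0 < w ⬝ᵥ x} := by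
  refine isOpen_iff_eventually.2 fun w hw => hK.eventually_forall_of_forall_eventually
    fun x hx => ?_
  have hcont : Continuous fun p : (ι → ℝ) × (ι → ℝ) => p.1 ⬝ᵥ p.2 :=
    continuous_fst.dotProduct continuous_snd
  exact hcont.continuousAt.eventually (lt_mem_nhds (hw x hx))

theorem ConvexCone.forall_dotProduct_pos_iff_sphere (V : ConvexCone ℝ (ι → ℝ)) (w : ι → ℝ) :
    (∀ x ∈ V, x ≠ 0 → 0 < w ⬝ᵥ x) ↔
      ∀ x ∈ (V : Set (ι → ℝ)) ∩ Metric.sphere 0 1, 0 < w ⬝ᵥ x := by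
  refine ⟨fun h x hx => h x hx.1 (ne_zero_of_mem_unit_sphere ⟨x, hx.2⟩), fun h x hx hx0 => ?_⟩
  have hnorm : 0 < ‖x‖ := norm_pos_iff.2 hx0
  have hunit : ‖x‖⁻¹ • x ∈ (V : Set (ι → ℝ)) ∩ Metric.sphere 0 1 :=
    ⟨V.smul_mem (inv_pos.2 hnorm) hx, by simp [norm_smul, hnorm.ne']⟩
  have := h _ hunit
  rw [dotProduct_smul, smul_eq_mul] at this
  exact pos_of_mul_pos_right this (inv_pos.2 hnorm).le

theorem ConvexCone.isOpen_setOf_dotProduct_pos {V : ConvexCone ℝ (ι → ℝ)}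
    (hV : IsClosed (V : Set (ι → ℝ))) :
    IsOpen {w : ι → ℝ | ∀ x ∈ V, x ≠ 0 → 0 < w ⬝ᵥ x} := by
  simp_rw [V.forall_dotProduct_pos_iff_sphere]
  exact isOpen_setOf_forall_dotProduct_pos ((isCompact_sphere 0 1).inter_left hV)

end Positivity

theorem denseRange_ratCast_pi {ι : Type*} : DenseRange fun (q : ι → ℚ) (i : ι) => (q i : ℝ) :=
  DenseRange.piMap fun _ => Rat.denseRange_cast

section RationalApproximation

variable {ι : Type*} [Fintype ι]

def orthProj {K : Type*} [Field K] (v q : ι → K) : ι → K :=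
  q - (q ⬝ᵥ v / v ⬝ᵥ v) • v

theorem orthProj_dotProduct {K : Type*} [Field K] [LinearOrder K] [IsStrictOrderedRing K]
    (v q : ι → K) : orthProj v q ⬝ᵥ v = 0 := by
  rcases eq_or_ne v 0 with rfl | hv
  · simp
  · have : v ⬝ᵥ v ≠ 0 := fun h => hv (dotProduct_self_eq_zero.1 h)
    simp [orthProj, sub_dotProduct, smul_dotProduct, div_mul_cancel₀ _ this]

theorem orthProj_of_dotProduct_eq_zero {K : Type*} [Field K] {v q : ι → K} (h : q ⬝ᵥ v = 0) :
    orthProj v q = q := by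
  simp [orthProj, h]

theorem continuous_orthProj (v : ι → ℝ) : Continuous (orthProj v) := by
  unfold orthProj
  fun_prop

theorem orthProj_ratCast (v q : ι → ℚ) :
    orthProj (fun i => (v i : ℝ)) (fun i => (q i : ℝ)) = fun i => ((orthProj v q i : ℚ) : ℝ) := by
  ext i
  simp [orthProj, dotProduct]

theorem exists_ratCast_mem_dotProduct_eq_zero {U : Set (ι → ℝ)} (hU : IsOpen U) {v : ι → ℚ}
    {w : ι → ℝ} (hwU : w ∈ U) (hwv : w ⬝ᵥ (fun i => (v i : ℝ)) = 0) :
    ∃ q : ι → ℚ, (fun i => (q i : ℝ)) ∈ U ∧ (fun i => (q i : ℝ)) ⬝ᵥ (fun i => (v i : ℝ)) = 0 := by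
  have hpre : IsOpen (orthProj (fun i => (v i : ℝ)) ⁻¹' U) := hU.preimage (continuous_orthProj _)
  obtain ⟨_, hqU, q, rfl⟩ := denseRange_ratCast_pi.inter_open_nonempty _ hpre
    ⟨w, by rwa [mem_preimage, orthProj_of_dotProduct_eq_zero hwv]⟩
  refine ⟨orthProj v q, ?_, ?_⟩
  · rwa [mem_preimage, orthProj_ratCast] at hqU
  · rw [← orthProj_ratCast]
    exact orthProj_dotProduct _ _

end RationalApproximation

section RayDecomposition

variable {E : Type*} [AddCommGroup E] [Module ℝ E] {V : Set E} {v : E} {G : E →ₗ[ℝ] ℝ}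

theorem LinearMap.eq_zero_of_mem_rayOf (hGv : G v = 0) {x : E} (hx : x ∈ rayOf v) : G x = 0 := by
  obtain ⟨t, -, rfl⟩ := hx
  simp [hGv]

theorem LinearMap.map_add_rayOf (hGv : G v = 0) {a r : E} (hr : r ∈ rayOf v) :
    G (a + r) = G a := by
  rw [map_add, G.eq_zero_of_mem_rayOf hGv hr, add_zero]

theorem LinearMap.nonneg_on_add_rayOf (hGv : G v = 0) (hGpos : ∀ x ∈ V, x ≠ 0 → 0 < G x) :
    ∀ x ∈ V + rayOf v, 0 ≤ G x := by
  rintro _ ⟨a, ha, r, hr, rfl⟩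
  rw [G.map_add_rayOf hGv hr]
  rcases eq_or_ne a 0 with rfl | ha0
  · simp
  · exact (hGpos a ha ha0).le

theorem LinearMap.setOf_mem_add_rayOf_eq_zero (hV0 : 0 ∈ V) (hGv : G v = 0)
    (hGpos : ∀ x ∈ V, x ≠ 0 → 0 < G x) : {x | x ∈ V + rayOf v ∧ G x = 0} = rayOf v := by
  ext x
  refine ⟨?_, fun hx => ⟨⟨0, hV0, x, hx, zero_add x⟩, G.eq_zero_of_mem_rayOf hGv hx⟩⟩
  rintro ⟨⟨a, ha, r, hr, rfl⟩, hzero⟩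
  rw [G.map_add_rayOf hGv hr] at hzero
  obtain rfl : a = 0 := by
    by_contra ha0
    exact (hGpos a ha ha0).ne' hzero
  simpa using hr

end RayDecomposition

theorem stmt_10_general (n : ℕ) (C V : ConvexCone ℝ (Fin n → ℝ))
    (hVclosed : IsClosed (V : Set (Fin n → ℝ)))
    (hV0 : (0 : Fin n → ℝ) ∈ V)
    (v : Fin n → ℝ) (hvrat : ∀ i, ∃ q : ℚ, v i = (q : ℝ))
    (R : Set (Fin n → ℝ)) (hR : R = rayOf v)
    (hsum : (C : Set (Fin n → ℝ)) =
      {x | ∃ a ∈ (V : Set (Fin n → ℝ)), ∃ r ∈ R, x = a + r})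
    (H : (Fin n → ℝ) →ₗ[ℝ] ℝ) (hHv : H v = 0)
    (hHpos : ∀ x ∈ V, x ≠ 0 → 0 < H x) :
    ∃ H' : (Fin n → ℝ) →ₗ[ℝ] ℝ,
      (∀ i, ∃ q : ℚ, H' (Pi.single i 1) = (q : ℝ)) ∧
      H' v = 0 ∧ (∀ x ∈ V, x ≠ 0 → 0 < H' x) ∧
      (∀ x ∈ C, 0 ≤ H' x) ∧ {x | x ∈ C ∧ H' x = 0} = R := by
  choose qv hqv using hvrat
  obtain rfl : v = fun i => (qv i : ℝ) := funext hqv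
  subst hR
  have hC : (C : Set (Fin n → ℝ)) = (V : Set (Fin n → ℝ)) + rayOf fun i => (qv i : ℝ) := by
    ext x
    simp only [hsum, mem_ofPred_eq, mem_add, eq_comm]
  have hH : H = dotProductEquiv ℝ (Fin n) ((dotProductEquiv ℝ (Fin n)).symm H) := by simp
  rw [hH] at hHv hHpos
  obtain ⟨q, hqpos, hqv⟩ := exists_ratCast_mem_dotProduct_eq_zero
    (V.isOpen_setOf_dotProduct_pos hVclosed) hHpos hHv
  let H' := dotProductEquiv ℝ (Fin n) fun i => (q i : ℝ)
  have hH'v : H' _ = 0 := hqv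
  refine ⟨H', fun i => ⟨q i, by simp [H']⟩, hH'v, hqpos, ?_, ?_⟩
  · intro x hx
    rw [← SetLike.mem_coe, hC] at hx
    exact H'.nonneg_on_add_rayOf hH'v hqpos x hx
  · simp_rw [← SetLike.mem_coe, hC]
    exact H'.setOf_mem_add_rayOf_eq_zero hV0 hH'v hqpos

/-- Let C ⊆ ℝⁿ be a closed convex cone, V ⊆ C a closed convex subcone, and v a nonzero
rational vector with ray R = ℝ_{≥0}·v, such that C = V + R and v ∉ V. Suppose there is a
linear functional H with H(v) = 0 and H > 0 on V \ {0}. Then there is a linear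
functional H′ with rational coefficients such that H′(v) = 0 and H′ > 0 on V \ {0};
consequently H′ ≥ 0 on C and {x ∈ C : H′(x) = 0} = R. -/
theorem stmt_10 (n : ℕ) (C V : ConvexCone ℝ (Fin n → ℝ))
    (hCclosed : IsClosed (C : Set (Fin n → ℝ)))
    (hVclosed : IsClosed (V : Set (Fin n → ℝ)))
    (hV0 : (0 : Fin n → ℝ) ∈ V)
    (hVC : (V : Set (Fin n → ℝ)) ⊆ (C : Set (Fin n → ℝ)))
    (v : Fin n → ℝ) (hv : v ≠ 0) (hvrat : ∀ i, ∃ q : ℚ, v i = (q : ℝ))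
    (R : Set (Fin n → ℝ)) (hR : R = rayOf v)
    (hsum : (C : Set (Fin n → ℝ)) =
      {x | ∃ a ∈ (V : Set (Fin n → ℝ)), ∃ r ∈ R, x = a + r})
    (hvV : v ∉ V)
    (H : (Fin n → ℝ) →ₗ[ℝ] ℝ) (hHv : H v = 0)
    (hHpos : ∀ x ∈ V, x ≠ 0 → 0 < H x) :
    ∃ H' : (Fin n → ℝ) →ₗ[ℝ] ℝ,
      (∀ i, ∃ q : ℚ, H' (Pi.single i 1) = (q : ℝ)) ∧
      H' v = 0 ∧ (∀ x ∈ V, x ≠ 0 → 0 < H' x) ∧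
      (∀ x ∈ C, 0 ≤ H' x) ∧ {x | x ∈ C ∧ H' x = 0} = R :=
  stmt_10_general n C V hVclosed hV0 v hvrat R hR hsum H hHv hHpos
end
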